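/- arXiv:1605.01443 — 3 statements merged into one kernel-verified Lean document; each statement's English description precedes it below -/
import Mathlib

section
/- On a finite weighted graph with symmetric weights, for any vertex function u : V -> R, the supremum of <div_w phi, u>_V over edge functions phi with sup-norm at most 1 equals (1/2) sum_{x,y in V} w(x,y)^q |u(y) - u(x)|. -/
/-- The graph divergence operator
`(div_w φ)(x) = (1/(2 d(x)^r)) ∑_y w(x,y)^q (φ(x,y) - φ(y,x))`. -/
noncomputable def graphDiv {V : Type*} [Fintype V] (w : V → V → ℝ) (d : V → ℝ)
    (r q : ℝ) (φ : V → V → ℝ) (x : V) : ℝ :=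
  (1 / (2 * d x ^ r)) * ∑ y, w x y ^ q * (φ x y - φ y x)

/-!
Pairing `div_w φ` with `u` and summing by parts over the symmetric weights gives
`⟨div_w φ, u⟩_V = (1/2) ∑_{x,y} w(x,y)^q φ(x,y) (u(x) - u(y))`. Each term is at most
`w(x,y)^q |u(y) - u(x)|` when `|φ| ≤ 1`, with equality for `φ(x,y) = sign (u(x) - u(y))`.
-/

open Finset

theorem abs_sign_le_one {α : Type*} [Ring α] [LinearOrder α] [IsStrictOrderedRing α] (a : α) :
    |(SignType.sign a : α)| ≤ 1 := by
  cases SignType.sign a <;> simp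

theorem sum_sum_mul_sub_swap_mul {V R : Type*} [Fintype V] [CommRing R] (c φ : V → V → R)
    (hc : ∀ x y, c x y = c y x) (u : V → R) :
    ∑ x, ∑ y, c x y * (φ x y - φ y x) * u x = ∑ x, ∑ y, c x y * φ x y * (u x - u y) := by
  have hswap : ∑ x, ∑ y, c x y * φ y x * u x = ∑ x, ∑ y, c x y * φ x y * u y := by
    rw [Finset.sum_comm]
    exact sum_congr rfl fun x _ => sum_congr rfl fun y _ => by rw [hc]
  simp only [mul_sub, sub_mul, sum_sub_distrib, hswap]

section

variable {V : Type*} [Fintype V] (w : V → V → ℝ) (d : V → ℝ) (r q : ℝ)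

theorem graphDiv_mul_rpow (φ : V → V → ℝ) {x : V} (hd : d x ^ r ≠ 0) :
    graphDiv w d r q φ x * d x ^ r = (1 / 2) * ∑ y, w x y ^ q * (φ x y - φ y x) := by
  rw [graphDiv]
  field_simp

theorem sum_graphDiv_mul_mul_rpow (hsymm : ∀ x y, w x y = w y x) (hd : ∀ x, d x ^ r ≠ 0)
    (u : V → ℝ) (φ : V → V → ℝ) :
    ∑ x, graphDiv w d r q φ x * u x * d x ^ r
      = (1 / 2) * ∑ x, ∑ y, w x y ^ q * φ x y * (u x - u y) := by
  calc ∑ x, graphDiv w d r q φ x * u x * d x ^ r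
      = (1 / 2) * ∑ x, ∑ y, w x y ^ q * (φ x y - φ y x) * u x := by
        simp only [mul_right_comm _ (u _), graphDiv_mul_rpow w d r q φ (hd _), mul_sum, sum_mul,
          mul_assoc]
    _ = (1 / 2) * ∑ x, ∑ y, w x y ^ q * φ x y * (u x - u y) := by
        rw [sum_sum_mul_sub_swap_mul _ φ (fun x y => by rw [hsymm]) u]

end

theorem mul_mul_sub_le_mul_abs_sub {c t a b : ℝ} (hc : 0 ≤ c) (ht : |t| ≤ 1) :
    c * t * (a - b) ≤ c * |b - a| := by
  rw [mul_assoc, abs_sub_comm]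
  gcongr
  calc t * (a - b) ≤ |t| * |a - b| := by rw [← abs_mul]; exact le_abs_self _
    _ ≤ |a - b| := mul_le_of_le_one_left (abs_nonneg _) ht

theorem TV_sup_formula_general {V : Type*} [Fintype V]
    (w : V → V → ℝ) (d : V → ℝ) (r q : ℝ)
    (hsymm : ∀ x y, w x y = w y x) (hnonneg : ∀ x y, 0 ≤ w x y)
    (hd : ∀ x, 0 < d x) (u : V → ℝ) :
    IsGreatest {v : ℝ | ∃ φ : V → V → ℝ, (∀ x y, |φ x y| ≤ 1) ∧
        v = ∑ x, graphDiv w d r q φ x * u x * d x ^ r}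
      ((1 / 2) * ∑ x, ∑ y, w x y ^ q * |u y - u x|) := by
  have hpair := sum_graphDiv_mul_mul_rpow w d r q hsymm fun x => (Real.rpow_pos_of_pos (hd x) r).ne'
  refine ⟨⟨fun x y => SignType.sign (u x - u y), fun x y => abs_sign_le_one _, ?_⟩, ?_⟩
  · rw [hpair]
    simp only [mul_assoc, sign_mul_self, abs_sub_comm]
  · rintro _ ⟨φ, hφ, rfl⟩
    rw [hpair]
    gcongr 1 / 2 * ∑ x, ∑ y, ?_ with x _ y _
    exact mul_mul_sub_le_mul_abs_sub (Real.rpow_nonneg (hnonneg x y) q) (hφ x y)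

/-- for any vertex function `u`, the supremum of
`⟨div_w φ, u⟩_V = ∑_x (div_w φ)(x) u(x) d(x)^r` over edge functions `φ` with
sup-norm at most `1` equals `(1/2) ∑_{x,y} w(x,y)^q |u(y) - u(x)|`. -/
theorem TV_sup_formula {V : Type*} [Fintype V]
    (w : V → V → ℝ) (d : V → ℝ) (r q : ℝ)
    (hr : r ∈ Set.Icc (0 : ℝ) 1) (hq : q ∈ Set.Icc (1 / 2 : ℝ) 1)
    (hsymm : ∀ x y, w x y = w y x) (hnonneg : ∀ x y, 0 ≤ w x y)
    (hd : ∀ x, 0 < d x) (u : V → ℝ) :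
    IsGreatest {v : ℝ | ∃ φ : V → V → ℝ, (∀ x y, |φ x y| ≤ 1) ∧
        v = ∑ x, graphDiv w d r q φ x * u x * d x ^ r}
      ((1 / 2) * ∑ x, ∑ y, w x y ^ q * |u y - u x|) :=
  TV_sup_formula_general w d r q hsymm hnonneg hd u
end

section
/- Coarea formula on graphs: for a finite weighted graph with nonnegative symmetric weights w and any function u : V -> [0,1], we have sum_{x,y in V} w(x,y) |u(y) - u(x)| = integral from 0 to 1 of sum_{x,y in V} w(x,y) |u^alpha(y) - u^alpha(x)| d alpha, where u^alpha(x) = 1 if u(x) >= alpha and 0 otherwise. -/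
/-!
The threshold indicators of `u y` and `u x` differ exactly for `α` strictly above the smaller
and at most the larger of the two values, so the inner integrand of each edge term is the
indicator of an interval of length `|u y - u x|`. Integrating term by term gives the formula.
-/

open MeasureTheory

lemma abs_sub_ite_le_eq_indicator_Ioc (a b α : ℝ) :
    |(if α ≤ b then (1 : ℝ) else 0) - (if α ≤ a then (1 : ℝ) else 0)|
      = (Set.Ioc (min a b) (max a b)).indicator 1 α := by
  by_cases ha : α ≤ a <;> by_cases hb : α ≤ b <;>
    simp [ha, hb, not_le.mp]

lemma integrable_abs_sub_ite_le (a b : ℝ) :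
    Integrable (fun α =>
      |(if α ≤ b then (1 : ℝ) else 0) - (if α ≤ a then (1 : ℝ) else 0)|) := by
  simp only [abs_sub_ite_le_eq_indicator_Ioc]
  exact (integrable_indicator_iff measurableSet_Ioc).mpr
    (integrableOn_const measure_Ioc_lt_top.ne)

lemma setIntegral_Ioc_abs_sub_ite_le {a b c d : ℝ} (ha : a ∈ Set.Icc c d)
    (hb : b ∈ Set.Icc c d) :
    ∫ α in Set.Ioc c d,
        |(if α ≤ b then (1 : ℝ) else 0) - (if α ≤ a then (1 : ℝ) else 0)| = |b - a| := by
  have hsub : Set.Ioc (min a b) (max a b) ⊆ Set.Ioc c d :=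
    Set.Ioc_subset_Ioc (le_min ha.1 hb.1) (max_le ha.2 hb.2)
  simp only [abs_sub_ite_le_eq_indicator_Ioc]
  rw [integral_indicator measurableSet_Ioc, Measure.restrict_restrict measurableSet_Ioc,
    Set.inter_eq_self_of_subset_left hsub, Pi.one_def, setIntegral_const,
    Real.volume_real_Ioc_of_le min_le_max, max_sub_min_eq_abs, smul_eq_mul, mul_one,
    abs_sub_comm]

theorem graph_coarea_formula_general {V : Type*} [Fintype V]
    (w : V → V → ℝ)
    (u : V → ℝ) (hu : ∀ x, u x ∈ Set.Icc (0 : ℝ) 1) :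
    ∑ x, ∑ y, w x y * |u y - u x|
      = ∫ α in Set.Ioc (0 : ℝ) 1,
          ∑ x, ∑ y, w x y * |(if α ≤ u y then (1 : ℝ) else 0)
            - (if α ≤ u x then (1 : ℝ) else 0)| := by
  have hint : ∀ x y, IntegrableOn (fun α => w x y *
      |(if α ≤ u y then (1 : ℝ) else 0) - (if α ≤ u x then (1 : ℝ) else 0)|) (Set.Ioc 0 1) :=
    fun x y => ((integrable_abs_sub_ite_le (u x) (u y)).const_mul _).integrableOn
  rw [integral_finsetSum _ fun x _ => integrable_finsetSum _ fun y _ => hint x y]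
  refine Finset.sum_congr rfl fun x _ => ?_
  rw [integral_finsetSum _ fun y _ => hint x y]
  refine Finset.sum_congr rfl fun y _ => ?_
  rw [integral_const_mul, setIntegral_Ioc_abs_sub_ite_le (hu x) (hu y)]

/-- coarea formula on graphs. For nonnegative symmetric weights `w`
and `u : V → [0,1]`,
`∑_{x,y} w(x,y) |u(y) - u(x)| = ∫_{(0,1]} ∑_{x,y} w(x,y) |u^α(y) - u^α(x)| dα`,
where `u^α` is the superlevel-set indicator of `u` at threshold `α`. -/
theorem graph_coarea_formula {V : Type*} [Fintype V]
    (w : V → V → ℝ) (hsymm : ∀ x y, w x y = w y x) (hnonneg : ∀ x y, 0 ≤ w x y)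
    (u : V → ℝ) (hu : ∀ x, u x ∈ Set.Icc (0 : ℝ) 1) :
    ∑ x, ∑ y, w x y * |u y - u x|
      = ∫ α in Set.Ioc (0 : ℝ) 1,
          ∑ x, ∑ y, w x y * |(if α ≤ u y then (1 : ℝ) else 0)
            - (if α ≤ u x then (1 : ℝ) else 0)| :=
  graph_coarea_formula_general w u hu
end

section
/- Binary thresholded combination preserves primal-dual optimality on a two-label component: let (u*, q*) be a primal-dual optimal pair and V_{k,j} a connected component on which u*_k(x) + u*_j(x) = 1, u*_i(x) = 0 for i != k,j, and C_k(x) + (div_w q*_k)(x) = C_j(x) + (div_w q*_j)(x). Define u^t to equal u* outside V_{k,j} and, inside V_{k,j}, u^t_k to be the indicator of {u*_k >= alpha}, u^t_j = 1 - u^t_k, u^t_i = 0 otherwise. Then the primal-dual energy satisfies E(u*, q*) = E(u^t, q*). -/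
open scoped Classical

/-- The primal-dual energy `E(u,q) = ∑_i ∑_x u_i(x)(C_i(x) + (div_w q_i)(x))`. -/
noncomputable def pdEnergy {V : Type*} [Fintype V] {n : ℕ}
    (C : Fin n → V → ℝ) (w : V → V → ℝ) (d : V → ℝ) (r qe : ℝ)
    (u : Fin n → V → ℝ) (qf : Fin n → V → V → ℝ) : ℝ :=
  ∑ i, ∑ x, u i x * (C i x + graphDiv w d r qe (qf i) x)

/-- binary thresholded combination preserves primal-dual
optimality on a two-label component. If `(u*, q*)` is a primal-dual optimal
pair and `V_{k,j}` is a connected component on which `u*_k + u*_j = 1`,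
`u*_i = 0` for `i ≠ k, j`, and the costs `C_k + div_w q*_k` and
`C_j + div_w q*_j` coincide, then the function `u^t` obtained by replacing
`u*_k` on `V_{k,j}` by the indicator of `{u*_k ≥ α}` and `u*_j` by its
complement satisfies `E(u*, q*) = E(u^t, q*)`. -/
theorem threshold_two_label_component {V : Type*} [Fintype V] {n : ℕ}
    (C : Fin n → V → ℝ) (w : V → V → ℝ) (d : V → ℝ) (r qe : ℝ)
    (hsymm : ∀ x y, w x y = w y x) (hnonneg : ∀ x y, 0 ≤ w x y)
    (hd : ∀ x, 0 < d x)
    (ustar : Fin n → V → ℝ) (qstar : Fin n → V → V → ℝ)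
    (huIcc : ∀ i x, ustar i x ∈ Set.Icc (0 : ℝ) 1)
    (husum : ∀ x, ∑ i, ustar i x = 1)
    (hqstar : ∀ i x y, |qstar i x y| ≤ 1)
    (hopt_primal : ∀ u : Fin n → V → ℝ,
      (∀ i x, u i x ∈ Set.Icc (0 : ℝ) 1) → (∀ x, ∑ i, u i x = 1) →
      pdEnergy C w d r qe ustar qstar ≤ pdEnergy C w d r qe u qstar)
    (hopt_dual : ∀ qf : Fin n → V → V → ℝ, (∀ i x y, |qf i x y| ≤ 1) →
      pdEnergy C w d r qe ustar qf ≤ pdEnergy C w d r qe ustar qstar)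
    (k j : Fin n) (hkj : k ≠ j) (Vkj : Set V)
    (hconn : ∀ x ∈ Vkj, ∀ y ∈ Vkj,
      Relation.ReflTransGen (fun a b => a ∈ Vkj ∧ b ∈ Vkj ∧ w a b ≠ 0) x y)
    (hsum_kj : ∀ x ∈ Vkj, ustar k x + ustar j x = 1)
    (hzero : ∀ x ∈ Vkj, ∀ i : Fin n, i ≠ k → i ≠ j → ustar i x = 0)
    (hcost_eq : ∀ x ∈ Vkj,
      C k x + graphDiv w d r qe (qstar k) x
        = C j x + graphDiv w d r qe (qstar j) x)
    (α : ℝ) (hα : α ∈ Set.Ioo (0 : ℝ) 1)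
    (ut : Fin n → V → ℝ)
    (hut : ∀ i x, ut i x =
      if x ∈ Vkj then
        (if i = k then (if α ≤ ustar k x then (1 : ℝ) else 0)
         else if i = j then 1 - (if α ≤ ustar k x then (1 : ℝ) else 0)
         else 0)
      else ustar i x) :
    pdEnergy C w d r qe ustar qstar = pdEnergy C w d r qe ut qstar := by
  have key : ∀ u : Fin n → V → ℝ, pdEnergy C w d r qe u qstar
      = ∑ x, ∑ i, u i x * (C i x + graphDiv w d r qe (qstar i) x) :=
    fun u => Finset.sum_comm ..
  rw [key, key]
  refine Finset.sum_congr rfl fun x _ => ?_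
  by_cases hx : x ∈ Vkj
  · set f : Fin n → ℝ := fun i => C i x + graphDiv w d r qe (qstar i) x with hf
    have hsum1 : ∑ i, ustar i x * f i = ustar k x * f k + ustar j x * f j := by
      rw [← Finset.sum_subset (Finset.subset_univ ({k, j} : Finset (Fin n)))
        (fun i _ hi => by
          simp only [Finset.mem_insert, Finset.mem_singleton, not_or] at hi
          rw [hzero x hx i hi.1 hi.2, zero_mul]),
        Finset.sum_pair hkj]
    have hsum2 : ∑ i, ut i x * f i = ut k x * f k + ut j x * f j := by
      rw [← Finset.sum_subset (Finset.subset_univ ({k, j} : Finset (Fin n)))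
        (fun i _ hi => by
          simp only [Finset.mem_insert, Finset.mem_singleton, not_or] at hi
          rw [hut i x, if_pos hx, if_neg hi.1, if_neg hi.2, zero_mul]),
        Finset.sum_pair hkj]
    have hfeq : f k = f j := hcost_eq x hx
    have hutk : ut k x = (if α ≤ ustar k x then (1 : ℝ) else 0) := by
      rw [hut k x, if_pos hx, if_pos rfl]
    have hutj : ut j x = 1 - (if α ≤ ustar k x then (1 : ℝ) else 0) := by
      rw [hut j x, if_pos hx, if_neg (Ne.symm hkj), if_pos rfl]
    have h1 := hsum_kj x hx
    rw [hsum1, hsum2, hutk, hutj, ← hfeq]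
    linear_combination f k * h1
  · refine Finset.sum_congr rfl fun i _ => ?_
    rw [hut i x, if_neg hx]
end
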